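/- Let P₁, P₂ be real numbers with P₁² + P₂² > 1, set s = √(P₁² + P₂² − 1), w(L) = 1 + P₁·sin L + P₂·cos L, and u(L) = (P₁ − (P₂ − 1)·tan(L/2))/s. Let L be a real number with cos(L/2) ≠ 0 and |u(L)| < 1. Then the function F(L) = −(2·P₁/s³)·artanh(u(L)) + (P₂ + cos L)/((P₁² + P₂² − 1)·w(L)) is differentiable at L with derivative F′(L) = sin L / w(L)². -/

import Mathlib

/-!
With `t = tan (L / 2)` the Weierstrass substitution gives the identity
`s² - (P₁ - (P₂ - 1) t)² = (P₂ - 1) (1 + t²) w(L)`, so `|u(L)| < 1` forces `w(L) ≠ 0`, and the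
chain rule turns the artanh term into `P₁ / (s² w)`. The rational term has derivative
`((P₂² - 1) sin L - P₁ (1 + P₂ cos L)) / (s² w²)` by `sin² + cos² = 1`, and the two add up to
`sin L / w²`.
-/

open Real

/-- The inverse hyperbolic tangent, `artanh x = ½ log((1+x)/(1−x))`. -/
noncomputable def Real.artanhLog (x : ℝ) : ℝ := (1 / 2) * Real.log ((1 + x) / (1 - x))

namespace Real

theorem hasDerivAt_artanhLog {y : ℝ} (hy : |y| < 1) :
    HasDerivAt artanhLog (1 - y ^ 2)⁻¹ y := by
  obtain ⟨hy_gt, hy_lt⟩ := abs_lt.mp hy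
  have hpos : 0 < 1 + y := by linarith
  have hneg : 0 < 1 - y := by linarith
  have hquot : HasDerivAt (fun y => (1 + y) / (1 - y)) (2 / (1 - y) ^ 2) y :=
    (((hasDerivAt_id' y).const_add 1).div ((hasDerivAt_id' y).const_sub 1) hneg.ne').congr_deriv
      (by ring)
  have hsq : 1 - y ^ 2 ≠ 0 := by nlinarith
  refine ((hquot.log (div_pos hpos hneg).ne').const_mul (1 / 2)).congr_deriv ?_
  field_simp
  ring

theorem hasDerivAt_tan_half {x : ℝ} (hx : cos (x / 2) ≠ 0) :
    HasDerivAt (fun x => tan (x / 2)) ((1 + tan (x / 2) ^ 2) / 2) x := by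
  refine ((hasDerivAt_tan hx).comp x ((hasDerivAt_id x).div_const 2)).congr_deriv ?_
  rw [← inv_inv (cos (x / 2) ^ 2), ← inv_one_add_tan_sq hx]
  simp [div_eq_mul_inv]

theorem one_add_tan_half_sq_mul_sin (x : ℝ) :
    (1 + tan (x / 2) ^ 2) * sin x = 2 * tan (x / 2) := by
  rw [sin_eq_two_mul_tan_half_div_one_add_tan_half_sq, mul_div_cancel₀]
  positivity

theorem one_add_tan_half_sq_mul_cos {x : ℝ} (hx : cos (x / 2) ≠ 0) :
    (1 + tan (x / 2) ^ 2) * cos x = 1 - tan (x / 2) ^ 2 := by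
  have hcos : cos x ≠ -1 := by
    have hdouble := cos_two_mul (x / 2)
    rw [mul_div_cancel₀ x two_ne_zero] at hdouble
    nlinarith [sq_pos_of_ne_zero hx]
  rw [cos_eq_two_mul_tan_half_div_one_sub_tan_half_sq x hcos, mul_div_cancel₀]
  positivity

end Real

section

variable {P₁ P₂ s x : ℝ}

theorem sq_sub_sq_tan_half_eq (hs : s ^ 2 = P₁ ^ 2 + P₂ ^ 2 - 1) (hx : cos (x / 2) ≠ 0) :
    s ^ 2 - (P₁ - (P₂ - 1) * tan (x / 2)) ^ 2
      = (P₂ - 1) * (1 + tan (x / 2) ^ 2) * (1 + P₁ * sin x + P₂ * cos x) := by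
  rw [hs]
  linear_combination (-(P₂ - 1) * P₁) * one_add_tan_half_sq_mul_sin x
    + (-(P₂ - 1) * P₂) * one_add_tan_half_sq_mul_cos hx

theorem mul_one_add_mul_sin_add_mul_cos_pos (hs0 : s ≠ 0) (hs : s ^ 2 = P₁ ^ 2 + P₂ ^ 2 - 1)
    (hx : cos (x / 2) ≠ 0) (hu : |(P₁ - (P₂ - 1) * tan (x / 2)) / s| < 1) :
    0 < (P₂ - 1) * (1 + tan (x / 2) ^ 2) * (1 + P₁ * sin x + P₂ * cos x) := by
  rw [abs_div, div_lt_one (abs_pos.mpr hs0), ← sq_lt_sq] at hu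
  rw [← sq_sub_sq_tan_half_eq hs hx]
  linarith

theorem hasDerivAt_artanhLog_tan_half (hs0 : s ≠ 0) (hs : s ^ 2 = P₁ ^ 2 + P₂ ^ 2 - 1)
    (hx : cos (x / 2) ≠ 0) (hu : |(P₁ - (P₂ - 1) * tan (x / 2)) / s| < 1) :
    HasDerivAt (fun x => artanhLog ((P₁ - (P₂ - 1) * tan (x / 2)) / s))
      (-s / (2 * (1 + P₁ * sin x + P₂ * cos x))) x := by
  have hkey := sq_sub_sq_tan_half_eq hs hx
  have hpos := mul_one_add_mul_sin_add_mul_cos_pos hs0 hs hx hu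
  have hw : 1 + P₁ * sin x + P₂ * cos x ≠ 0 := right_ne_zero_of_mul hpos.ne'
  have hP : P₂ - 1 ≠ 0 := left_ne_zero_of_mul (left_ne_zero_of_mul hpos.ne')
  have hinner : HasDerivAt (fun x => (P₁ - (P₂ - 1) * tan (x / 2)) / s)
      (-((P₂ - 1) * ((1 + tan (x / 2) ^ 2) / 2)) / s) x :=
    (((hasDerivAt_tan_half hx).const_mul (P₂ - 1)).const_sub P₁).div_const s
  refine ((hasDerivAt_artanhLog hu).comp x hinner).congr_deriv ?_
  have h1 : 1 - ((P₁ - (P₂ - 1) * tan (x / 2)) / s) ^ 2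
      = (P₂ - 1) * (1 + tan (x / 2) ^ 2) * (1 + P₁ * sin x + P₂ * cos x) / s ^ 2 := by
    rw [← hkey]; field_simp
  rw [h1]
  field_simp

theorem hasDerivAt_add_cos_div_mul_one_add_mul_sin_add_mul_cos (c : ℝ) (hc : c ≠ 0)
    (hw : 1 + P₁ * sin x + P₂ * cos x ≠ 0) :
    HasDerivAt (fun x => (P₂ + cos x) / (c * (1 + P₁ * sin x + P₂ * cos x)))
      (((P₂ ^ 2 - 1) * sin x - P₁ * (1 + P₂ * cos x)) / (c * (1 + P₁ * sin x + P₂ * cos x) ^ 2))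
      x := by
  have hw_deriv : HasDerivAt (fun x => 1 + P₁ * sin x + P₂ * cos x) (P₁ * cos x - P₂ * sin x) x :=
    ((((hasDerivAt_sin x).const_mul P₁).const_add 1).add
      ((hasDerivAt_cos x).const_mul P₂)).congr_deriv (by ring)
  have hden := hw_deriv.const_mul c
  refine (((hasDerivAt_cos x).const_add P₂).div hden (mul_ne_zero hc hw)).congr_deriv ?_
  rw [div_eq_div_iff (pow_ne_zero 2 (mul_ne_zero hc hw)) (mul_ne_zero hc (pow_ne_zero 2 hw))]
  linear_combination (-P₁ * c ^ 2 * (1 + P₁ * sin x + P₂ * cos x) ^ 2) * sin_sq_add_cos_sq x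

end

/-- Closed-form antiderivative of `I_s2`: with `s = √(P₁² + P₂² - 1)`,
`w(L) = 1 + P₁ sin L + P₂ cos L` and `u(L) = (P₁ - (P₂ - 1) tan(L/2))/s`, the
function `F(L) = -(2P₁/s³)·artanh(u(L)) + (P₂ + cos L)/((P₁² + P₂² - 1) w(L))`
has derivative `sin L / w(L)²` at `L`. -/
theorem Is2_antiderivative (P₁ P₂ L : ℝ) (h : 1 < P₁ ^ 2 + P₂ ^ 2)
    (hc : cos (L / 2) ≠ 0)
    (hu : |(P₁ - (P₂ - 1) * tan (L / 2)) / Real.sqrt (P₁ ^ 2 + P₂ ^ 2 - 1)| < 1) :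
    HasDerivAt
      (fun x : ℝ =>
        -(2 * P₁ / Real.sqrt (P₁ ^ 2 + P₂ ^ 2 - 1) ^ 3) *
            Real.artanhLog ((P₁ - (P₂ - 1) * tan (x / 2)) / Real.sqrt (P₁ ^ 2 + P₂ ^ 2 - 1)) +
          (P₂ + cos x) / ((P₁ ^ 2 + P₂ ^ 2 - 1) * (1 + P₁ * sin x + P₂ * cos x)))
      (sin L / (1 + P₁ * sin L + P₂ * cos L) ^ 2) L := by
  have hpos : 0 < P₁ ^ 2 + P₂ ^ 2 - 1 := by linarith
  have hs0 : √(P₁ ^ 2 + P₂ ^ 2 - 1) ≠ 0 := (sqrt_pos.mpr hpos).ne'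
  have hs : √(P₁ ^ 2 + P₂ ^ 2 - 1) ^ 2 = P₁ ^ 2 + P₂ ^ 2 - 1 := sq_sqrt hpos.le
  have hw : 1 + P₁ * sin L + P₂ * cos L ≠ 0 :=
    right_ne_zero_of_mul (mul_one_add_mul_sin_add_mul_cos_pos hs0 hs hc hu).ne'
  refine (((hasDerivAt_artanhLog_tan_half hs0 hs hc hu).const_mul _).add
    (hasDerivAt_add_cos_div_mul_one_add_mul_sin_add_mul_cos _ hpos.ne' hw)).congr_deriv ?_
  rw [pow_succ, hs]
  field_simp
  ring
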